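/- Let N be a 2-rooted network on X. Then N is proper forest-based if and only if Γ(N) has a bipartite omni-extension (i.e., an omni-extension admitting a proper 2-coloring). -/

import Mathlib

open Classical

noncomputable def outdeg {V : Type*} (A : V → V → Prop) (v : V) : ℕ := {u | A v u}.ncard
noncomputable def indeg {V : Type*} (A : V → V → Prop) (v : V) : ℕ := {u | A u v}.ncard

def Acyclic {V : Type*} (A : V → V → Prop) : Prop := ∀ v : V, ¬ Relation.TransGen A v v

def undirConn {V : Type*} (A : V → V → Prop) : Prop :=
  ∀ u v : V, Relation.ReflTransGen (fun a b => A a b ∨ A b a) u v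

/-- A (multiply rooted) network with leaf set `X`: a semi-binary, connected DAG in which
the leaves (vertices of outdegree 0) are exactly `X` and every root has outdegree ≥ 2. -/
structure IsNetwork {V : Type*} (A : V → V → Prop) (X : Set V) : Prop where
  acyclic : Acyclic A
  conn : undirConn A
  leaves : ∀ v, outdeg A v = 0 ↔ v ∈ X
  roots2 : ∀ v, indeg A v = 0 → 2 ≤ outdeg A v
  semibinary : ∀ v, 2 ≤ indeg A v → indeg A v = 2 ∧ outdeg A v = 1

/-- A (rooted) forest: every vertex has indegree at most one, and there are no directed cycles. -/
def IsForest {V : Type*} (F : V → V → Prop) : Prop := (∀ v, indeg F v ≤ 1) ∧ Acyclic F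

/-- Two vertices lie in the same tree (connected component) of the forest `F`. -/
def sameTree {V : Type*} (F : V → V → Prop) (u v : V) : Prop :=
  Relation.ReflTransGen (fun a b => F a b ∨ F b a) u v

/-- `F` is a subdivision forest for the network `(V,A)` with leaf set `X`: a spanning
subforest with the same leaf set, all non-forest arcs joining distinct trees of `F`. -/
def SubdivForest {V : Type*} (A F : V → V → Prop) (X : Set V) : Prop :=
  (∀ u v, F u v → A u v) ∧ IsForest F ∧
    (∀ v, outdeg F v = 0 ↔ v ∈ X) ∧
    (∀ u v, A u v → ¬ F u v → ¬ sameTree F u v)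

/-- A network is forest-based if it admits a subdivision forest. -/
def ForestBased {V : Type*} (A : V → V → Prop) (X : Set V) : Prop :=
  ∃ F : V → V → Prop, SubdivForest A F X

/-- `g = γ_v`: `g` is the lowest ancestor of `v` lying in `RH(N) = R(N) ∪ H(N)`
(the vertices of indegree ≠ 1), i.e. the directed path from `g` to `v` passes only
through tree vertices (indegree 1) after `g`. -/
def isGamma {V : Type*} (A : V → V → Prop) (g v : V) : Prop :=
  indeg A g ≠ 1 ∧ Relation.ReflTransGen (fun a b => A a b ∧ indeg A b = 1) g v

/-- The graph `Γ(N)` on `RH(N)`: `u` and `v` are joined if some hybrid vertex has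
parents `u'`, `v'` with `γ_{u'} = u` and `γ_{v'} = v`. -/
def GammaN {V : Type*} (A : V → V → Prop) (u v : V) : Prop :=
  ∃ h u' v', 2 ≤ indeg A h ∧ A u' h ∧ A v' h ∧ u' ≠ v' ∧
    isGamma A u u' ∧ isGamma A v v'

/-- An omnian: a non-leaf vertex all of whose children are hybrid vertices. -/
def Omnian {V : Type*} (A : V → V → Prop) (v : V) : Prop :=
  outdeg A v ≠ 0 ∧ ∀ c, A v c → 2 ≤ indeg A c

/-- `E` is an omni-extension of `Γ(N)`: a supergraph of `Γ(N)` on the vertex set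
`RH(N)` such that every omnian `v` has a child `h` with `{γ_u, h}` an edge of `E`,
where `u` is the other parent of `h`. -/
def OmniExt {V : Type*} (A : V → V → Prop) (E : V → V → Prop) : Prop :=
  Symmetric E ∧ (∀ u v, E u v → indeg A u ≠ 1 ∧ indeg A v ≠ 1) ∧
    (∀ u v, GammaN A u v → E u v) ∧
    ∀ v, Omnian A v → ∃ h u g, A v h ∧ 2 ≤ indeg A h ∧ A u h ∧ u ≠ v ∧
      isGamma A g u ∧ E g h

/-- Proper forest-based: forest-based with a base forest having exactly as many
component trees (roots of the subdivision forest) as `N` has roots. -/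
def ProperFB {V : Type*} (A : V → V → Prop) (X : Set V) : Prop :=
  ∃ F : V → V → Prop, SubdivForest A F X ∧
    {v | indeg F v = 0}.ncard = {v | indeg A v = 0}.ncard

/-!
In both directions a base forest and a 2-colouring determine each other: the forest arcs are
exactly the arcs `u → v` along which the colouring is constant, once it is transported from
`RH(N)` to every vertex `v` through `γ_v`. If `N` has a base forest with two trees, colour each
vertex by its tree: every hybrid has exactly one forest parent, so its two parents, and hence
their `γ`'s, get different colours, and an omnian `v` with forest child `h` and other parent `u`
of `h` gives the bichromatic pair `{γ_u, h}`. Conversely, given a proper 2-colouring `σ` of an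
omni-extension, keep the arcs along which `σ ∘ γ` is constant: the `Γ(N)`-edge between the
`γ`'s of the two parents of a hybrid makes it keep exactly one of them, the omni-edge `{γ_u, h}`
makes every omnian keep its arc to `h`, and the other arcs join vertices of different colours,
hence different trees.
-/

section Digraph

variable {V : Type*} {A : V → V → Prop}

lemma indeg_ne_zero_of_adj [Finite V] {u v : V} (h : A u v) : indeg A v ≠ 0 :=
  Set.ncard_ne_zero_of_mem (s := {u | A u v}) h

lemma outdeg_eq_zero_iff [Finite V] {v : V} : outdeg A v = 0 ↔ ∀ u, ¬ A v u := by
  rw [outdeg, Set.ncard_eq_zero, Set.eq_empty_iff_forall_notMem]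
  rfl

lemma indeg_le_one_iff [Finite V] {v : V} : indeg A v ≤ 1 ↔ ∀ a b, A a v → A b v → a = b :=
  (Set.ncard_le_one_iff (s := {u | A u v})).trans ⟨fun h a b => h, fun h _ _ => h _ _⟩

lemma one_lt_indeg_iff [Finite V] {v : V} : 1 < indeg A v ↔ ∃ a b, A a v ∧ A b v ∧ a ≠ b :=
  Set.one_lt_ncard_iff

lemma indeg_mono [Finite V] {B : V → V → Prop} (h : ∀ u v, A u v → B u v) (v : V) :
    indeg A v ≤ indeg B v :=
  Set.ncard_le_ncard (fun u hu => h u v hu)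

lemma exists_parent_of_indeg_eq_one {v : V} (h : indeg A v = 1) :
    ∃ p, A p v ∧ ∀ q, A q v → q = p := by
  obtain ⟨p, hp⟩ := Set.ncard_eq_one.mp h
  have hpv : p ∈ {u | A u v} := hp ▸ rfl
  exact ⟨p, hpv, fun q hq => (hp ▸ hq : q ∈ ({p} : Set V))⟩

lemma parents_of_indeg_eq_two [Finite V] {h u v : V} (hu : A u h) (hv : A v h) (huv : u ≠ v)
    (h2 : indeg A h = 2) {w : V} (hw : A w h) : w = u ∨ w = v := by
  have hsub : ({u, v} : Set V) ⊆ {w | A w h} := by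
    rintro w (rfl | rfl) <;> assumption
  have hpar : ({u, v} : Set V) = {w | A w h} :=
    Set.eq_of_subset_of_ncard_le hsub (by rw [Set.ncard_pair huv]; exact h2.le)
  exact (hpar ▸ hw : w ∈ ({u, v} : Set V))

lemma Acyclic.mono {B : V → V → Prop} (hB : Acyclic B) (h : ∀ u v, A u v → B u v) :
    Acyclic A :=
  fun v hv => hB v (Relation.TransGen.mono h _ _ hv)

lemma Acyclic.wellFounded [Finite V] (hac : Acyclic A) : WellFounded (Relation.TransGen A) :=
  have : Std.Irrefl (Relation.TransGen A) := ⟨hac⟩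
  Finite.wellFounded_of_trans_of_irrefl _

end Digraph

section Gamma

variable {V : Type*} {A : V → V → Prop}

lemma isGamma_self {v : V} (h : indeg A v ≠ 1) : isGamma A v v :=
  ⟨h, Relation.ReflTransGen.refl⟩

lemma isGamma.tail {g u v : V} (h : isGamma A g u) (huv : A u v) (hv : indeg A v = 1) :
    isGamma A g v :=
  ⟨h.1, h.2.tail ⟨huv, hv⟩⟩

lemma isGamma.eq_of_indeg_ne_one {g v : V} (h : isGamma A g v) (hv : indeg A v ≠ 1) : g = v := by
  rcases h.2.cases_tail with rfl | ⟨_, -, -, hv1⟩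
  · rfl
  · exact absurd hv1 hv

lemma exists_isGamma [Finite V] (hac : Acyclic A) (v : V) : ∃ g, isGamma A g v := by
  induction v using hac.wellFounded.induction with
  | _ v ih =>
    by_cases hv : indeg A v = 1
    · obtain ⟨p, hp, -⟩ := exists_parent_of_indeg_eq_one hv
      obtain ⟨g, hg⟩ := ih p (Relation.TransGen.single hp)
      exact ⟨g, hg.tail hp hv⟩
    · exact ⟨v, isGamma_self hv⟩

lemma isGamma.unique {g g' v : V} (h : isGamma A g v) (h' : isGamma A g' v) : g = g' := by
  obtain ⟨hg', hpath'⟩ := h'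
  induction hpath' generalizing g with
  | refl => exact h.eq_of_indeg_ne_one hg'
  | tail _ hab ih =>
    obtain ⟨hab, hb⟩ := hab
    obtain ⟨p, -, hpar⟩ := exists_parent_of_indeg_eq_one hb
    rcases h.2.cases_tail with rfl | ⟨c, hgc, hcb, -⟩
    · exact absurd hb h.1
    · exact ih ⟨h.1, (hpar c hcb).trans (hpar _ hab).symm ▸ hgc⟩

lemma isGamma.map_eq {β : Type*} {f : V → β} (hf : ∀ u v, A u v → indeg A v = 1 → f u = f v)
    {g v : V} (h : isGamma A g v) : f g = f v := by
  obtain ⟨-, hpath⟩ := h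
  induction hpath with
  | refl => rfl
  | tail _ hab ih => exact ih.trans (hf _ _ hab.1 hab.2)

end Gamma

section Forest

variable {V : Type*} {F : V → V → Prop}

lemma sameTree_of_adj {u v : V} (h : F u v) : sameTree F u v :=
  Relation.ReflTransGen.single (Or.inl h)

lemma sameTree.symm {u v : V} (h : sameTree F u v) : sameTree F v u := by
  induction h with
  | refl => exact Relation.ReflTransGen.refl
  | tail _ hab ih => exact Relation.ReflTransGen.head (Or.symm hab) ih

lemma sameTree.trans {u v w : V} (huv : sameTree F u v) (hvw : sameTree F v w) :
    sameTree F u w :=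
  Relation.ReflTransGen.trans huv hvw

lemma sameTree.map_eq {β : Type*} {f : V → β} (hf : ∀ u v, F u v → f u = f v) {u v : V}
    (h : sameTree F u v) : f u = f v := by
  induction h with
  | refl => rfl
  | tail _ hab ih => exact ih.trans (hab.elim (hf _ _) (fun h => (hf _ _ h).symm))

lemma exists_root_sameTree [Finite V] (hac : Acyclic F) (v : V) :
    ∃ r, indeg F r = 0 ∧ sameTree F r v := by
  induction v using hac.wellFounded.induction with
  | _ v ih =>
    by_cases hv : indeg F v = 0
    · exact ⟨v, hv, Relation.ReflTransGen.refl⟩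
    · obtain ⟨p, hp⟩ := Set.nonempty_of_ncard_ne_zero hv
      obtain ⟨r, hr, hrp⟩ := ih p (Relation.TransGen.single hp)
      exact ⟨r, hr, hrp.trans (sameTree_of_adj hp)⟩

lemma exists_coloring_iff_sameTree [Finite V] (hac : Acyclic F)
    (hroots : {v | indeg F v = 0}.ncard = 2) :
    ∃ σ : V → Bool, ∀ u v, σ u = σ v ↔ sameTree F u v := by
  obtain ⟨r₁, r₂, -, hr⟩ := Set.ncard_eq_two.mp hroots
  have hcover : ∀ v, sameTree F r₁ v ∨ sameTree F r₂ v := by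
    intro v
    obtain ⟨r, hr0, hrv⟩ := exists_root_sameTree hac v
    rcases (hr ▸ hr0 : r ∈ ({r₁, r₂} : Set V)) with rfl | rfl
    exacts [Or.inl hrv, Or.inr hrv]
  refine ⟨fun v => decide (sameTree F r₁ v), fun u v => ⟨fun h => ?_, fun h => ?_⟩⟩
  · by_cases hu : sameTree F r₁ u
    · exact hu.symm.trans (by simpa [hu] using h)
    · have hv : ¬ sameTree F r₁ v := by simpa [hu] using h
      exact ((hcover u).resolve_left hu).symm.trans ((hcover v).resolve_left hv)
  · simpa using ⟨fun hu => hu.trans h, fun hv => hv.trans h.symm⟩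

end Forest

section Forward

variable {V : Type*} [Finite V] {A F : V → V → Prop} {X : Set V}

lemma indeg_eq_zero_of_ncard_roots_eq (hFA : ∀ u v, F u v → A u v)
    (hcard : {v | indeg F v = 0}.ncard = {v | indeg A v = 0}.ncard) {v : V}
    (hv : indeg F v = 0) : indeg A v = 0 := by
  have hsub : {v | indeg A v = 0} ⊆ {v | indeg F v = 0} := fun v hv =>
    Nat.le_zero.mp ((indeg_mono hFA v).trans (Nat.le_of_eq hv))
  exact (Set.eq_of_subset_of_ncard_le hsub hcard.le ▸ hv : v ∈ {v | indeg A v = 0})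

lemma SubdivForest.exists_coloring (hF : SubdivForest A F X)
    (hroots : {v | indeg F v = 0}.ncard = 2) :
    ∃ σ : V → Bool, ∀ u v, A u v → (σ u = σ v ↔ F u v) := by
  obtain ⟨σ, hσ⟩ := exists_coloring_iff_sameTree hF.2.1.2 hroots
  refine ⟨σ, fun u v huv => ⟨fun h => ?_, fun h => (hσ u v).2 (sameTree_of_adj h)⟩⟩
  by_contra hFuv
  exact hF.2.2.2 u v huv hFuv ((hσ u v).1 h)

lemma exists_parent_of_adj (hroot : ∀ v, indeg F v = 0 → indeg A v = 0) {u v : V}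
    (huv : A u v) : ∃ p, F p v :=
  Set.nonempty_of_ncard_ne_zero fun h0 => indeg_ne_zero_of_adj huv (hroot v h0)

lemma adj_of_indeg_eq_one (hFA : ∀ u v, F u v → A u v)
    (hroot : ∀ v, indeg F v = 0 → indeg A v = 0) {u v : V} (huv : A u v)
    (hv : indeg A v = 1) : F u v := by
  obtain ⟨p, -, hpar⟩ := exists_parent_of_indeg_eq_one hv
  obtain ⟨q, hq⟩ := exists_parent_of_adj hroot huv
  rwa [hpar u huv, ← hpar q (hFA q v hq)]

lemma adj_iff_not_adj_of_hybrid (hnet : IsNetwork A X) (hFA : ∀ u v, F u v → A u v)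
    (hF : IsForest F) (hroot : ∀ v, indeg F v = 0 → indeg A v = 0) {h u v : V}
    (hu : A u h) (hv : A v h) (huv : u ≠ v) (hh : 2 ≤ indeg A h) : F u h ↔ ¬ F v h := by
  refine ⟨fun hFu hFv => huv (indeg_le_one_iff.mp (hF.1 h) u v hFu hFv), fun hFv => ?_⟩
  obtain ⟨q, hq⟩ := exists_parent_of_adj hroot hu
  rcases parents_of_indeg_eq_two hu hv huv (hnet.semibinary h hh).1 (hFA q h hq) with rfl | rfl
  exacts [hq, absurd hq hFv]

end Forward

lemma ProperFB.exists_bipartite_omniExt {V : Type*} [Finite V] {A : V → V → Prop} {X : Set V}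
    (hnet : IsNetwork A X) (hroots : {v | indeg A v = 0}.ncard = 2) (hP : ProperFB A X) :
    ∃ E : V → V → Prop, OmniExt A E ∧ ∃ σ : V → Bool, ∀ u v, E u v → σ u ≠ σ v := by
  obtain ⟨F, hF, hcard⟩ := hP
  have hroot := fun v => indeg_eq_zero_of_ncard_roots_eq hF.1 hcard (v := v)
  obtain ⟨σ, hσ⟩ := hF.exists_coloring (hcard.trans hroots)
  have hγ : ∀ {g v}, isGamma A g v → σ g = σ v := isGamma.map_eq fun u v huv hv =>
    (hσ u v huv).2 (adj_of_indeg_eq_one hF.1 hroot huv hv)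
  refine ⟨fun u v => indeg A u ≠ 1 ∧ indeg A v ≠ 1 ∧ σ u ≠ σ v,
    ⟨fun u v ⟨hu, hv, huv⟩ => ⟨hv, hu, huv.symm⟩, fun u v h => ⟨h.1, h.2.1⟩, ?_, ?_⟩,
    σ, fun u v h => h.2.2⟩
  · rintro g g' ⟨h, u, v, hh, hu, hv, huv, hg, hg'⟩
    refine ⟨hg.1, hg'.1, ?_⟩
    rw [hγ hg, hγ hg']
    intro hσuv
    have hFuv : F u h ↔ F v h := (hσ u h hu).symm.trans (hσuv ▸ hσ v h hv)
    exact iff_not_self (hFuv.symm.trans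
      (adj_iff_not_adj_of_hybrid hnet hF.1 hF.2.1 hroot hu hv huv hh))
  · rintro v ⟨hout, hchildren⟩
    obtain ⟨h, hvh⟩ : ∃ h, F v h := Set.nonempty_of_ncard_ne_zero fun h0 =>
      hout ((hnet.leaves v).2 ((hF.2.2.1 v).1 h0))
    have hh := hchildren h (hF.1 v h hvh)
    obtain ⟨a, b, ha, hb, hab⟩ := one_lt_indeg_iff.mp hh
    obtain ⟨u, hu, huv⟩ : ∃ u, A u h ∧ u ≠ v := by
      by_cases hav : a = v
      exacts [⟨b, hb, hav ▸ hab.symm⟩, ⟨a, ha, hav⟩]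
    have hFu : ¬ F u h := fun hFu => huv (indeg_le_one_iff.mp (hF.2.1.1 h) u v hFu hvh)
    obtain ⟨g, hg⟩ := exists_isGamma hnet.acyclic u
    refine ⟨h, u, g, hF.1 v h hvh, hh, hu, huv, hg, hg.1, by omega, ?_⟩
    rw [hγ hg]
    exact fun hσu => hFu ((hσ u h hu).1 hσu)

section Backward

lemma Bool.eq_of_ne_of_ne {a b c : Bool} (hab : a ≠ b) (hbc : b ≠ c) : a = c := by
  cases a <;> cases b <;> cases c <;> simp_all


variable {V : Type*} {A : V → V → Prop}

-- `σ (γ_v)`, written without choosing `γ_v`.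
noncomputable def gammaColor (A : V → V → Prop) (σ : V → Bool) (v : V) : Bool :=
  decide (∃ g, isGamma A g v ∧ σ g = true)

variable {σ : V → Bool}

lemma gammaColor_eq {g v : V} (hg : isGamma A g v) : gammaColor A σ v = σ g := by
  cases hσ : σ g
  · simp only [gammaColor, decide_eq_false_iff_not, not_exists, not_and]
    intro g' hg'
    simp [hg'.unique hg, hσ]
  · simpa [gammaColor] using ⟨g, hg, hσ⟩

lemma gammaColor_self {v : V} (hv : indeg A v ≠ 1) : gammaColor A σ v = σ v :=
  gammaColor_eq (isGamma_self hv)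

lemma gammaColor_eq_of_indeg_eq_one [Finite V] (hac : Acyclic A) {u v : V} (huv : A u v)
    (hv : indeg A v = 1) : gammaColor A σ u = gammaColor A σ v := by
  obtain ⟨g, hg⟩ := exists_isGamma hac u
  rw [gammaColor_eq hg, gammaColor_eq (hg.tail huv hv)]

def colorForest (A : V → V → Prop) (σ : V → Bool) (u v : V) : Prop :=
  A u v ∧ gammaColor A σ u = gammaColor A σ v

lemma colorForest_not_sameTree {u v : V} (huv : A u v) (hF : ¬ colorForest A σ u v) :
    ¬ sameTree (colorForest A σ) u v :=
  fun hsame => hF ⟨huv, hsame.map_eq fun _ _ h => h.2⟩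

variable [Finite V] {X : Set V} {E : V → V → Prop}

lemma gammaColor_ne_of_hybrid (hnet : IsNetwork A X) (hE : OmniExt A E)
    (hσ : ∀ u v, E u v → σ u ≠ σ v) {h u v : V} (hu : A u h) (hv : A v h) (huv : u ≠ v)
    (hh : 2 ≤ indeg A h) : gammaColor A σ u ≠ gammaColor A σ v := by
  obtain ⟨g, hg⟩ := exists_isGamma hnet.acyclic u
  obtain ⟨g', hg'⟩ := exists_isGamma hnet.acyclic v
  rw [gammaColor_eq hg, gammaColor_eq hg']
  exact hσ g g' (hE.2.2.1 g g' ⟨h, u, v, hh, hu, hv, huv, hg, hg'⟩)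

lemma colorForest_indeg_le_one (hnet : IsNetwork A X) (hE : OmniExt A E)
    (hσ : ∀ u v, E u v → σ u ≠ σ v) (v : V) : indeg (colorForest A σ) v ≤ 1 := by
  by_cases hv : indeg A v ≤ 1
  · exact (indeg_mono (fun _ _ h => h.1) v).trans hv
  · refine indeg_le_one_iff.2 fun a b ha hb => ?_
    by_contra hab
    exact gammaColor_ne_of_hybrid hnet hE hσ ha.1 hb.1 hab (by omega) (ha.2.trans hb.2.symm)

lemma colorForest_indeg_eq_zero (hnet : IsNetwork A X) (hE : OmniExt A E)
    (hσ : ∀ u v, E u v → σ u ≠ σ v) {v : V} :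
    indeg (colorForest A σ) v = 0 ↔ indeg A v = 0 := by
  refine ⟨fun h0 => ?_, fun h0 => Nat.le_zero.mp ((indeg_mono (fun _ _ h => h.1) v).trans h0.le)⟩
  by_contra hv
  rcases Nat.lt_or_ge 1 (indeg A v) with h2 | h1
  · obtain ⟨a, b, ha, hb, hab⟩ := one_lt_indeg_iff.mp h2
    by_cases hav : gammaColor A σ a = gammaColor A σ v
    · exact indeg_ne_zero_of_adj (show colorForest A σ a v from ⟨ha, hav⟩) h0
    · have hbv := Bool.eq_of_ne_of_ne (gammaColor_ne_of_hybrid hnet hE hσ hb ha hab.symm h2) hav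
      exact indeg_ne_zero_of_adj (show colorForest A σ b v from ⟨hb, hbv⟩) h0
  · have hv1 : indeg A v = 1 := by omega
    obtain ⟨p, hp, -⟩ := exists_parent_of_indeg_eq_one hv1
    exact indeg_ne_zero_of_adj
      (show colorForest A σ p v from ⟨hp, gammaColor_eq_of_indeg_eq_one hnet.acyclic hp hv1⟩) h0

lemma colorForest_outdeg_eq_zero (hnet : IsNetwork A X) (hE : OmniExt A E)
    (hσ : ∀ u v, E u v → σ u ≠ σ v) {v : V} : outdeg (colorForest A σ) v = 0 ↔ v ∈ X := by
  refine ⟨fun h0 => ?_, fun hvX => outdeg_eq_zero_iff.2 fun u h =>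
    outdeg_eq_zero_iff.1 ((hnet.leaves v).2 hvX) u h.1⟩
  rw [outdeg_eq_zero_iff] at h0
  rw [← hnet.leaves]
  by_contra hout
  by_cases homni : Omnian A v
  · obtain ⟨h, u, g, hvh, hh, huh, huv, hg, hgh⟩ := hE.2.2.2 v homni
    have hvu := gammaColor_ne_of_hybrid hnet hE hσ hvh huh huv.symm hh
    rw [gammaColor_eq hg] at hvu
    refine h0 h ⟨hvh, ?_⟩
    rw [gammaColor_self (by omega : indeg A h ≠ 1)]
    exact Bool.eq_of_ne_of_ne hvu (hσ g h hgh)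
  · obtain ⟨c, hvc, hc⟩ : ∃ c, A v c ∧ indeg A c < 2 := by simpa [Omnian, hout] using homni
    have hc1 : indeg A c = 1 := by have := indeg_ne_zero_of_adj hvc; omega
    exact h0 c ⟨hvc, gammaColor_eq_of_indeg_eq_one hnet.acyclic hvc hc1⟩

lemma properFB_of_bipartite_omniExt (hnet : IsNetwork A X) (hE : OmniExt A E)
    (hσ : ∀ u v, E u v → σ u ≠ σ v) : ProperFB A X := by
  refine ⟨colorForest A σ, ⟨fun _ _ h => h.1, ⟨colorForest_indeg_le_one hnet hE hσ,
    hnet.acyclic.mono fun _ _ h => h.1⟩, fun v => colorForest_outdeg_eq_zero hnet hE hσ,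
    fun _ _ => colorForest_not_sameTree⟩, ?_⟩
  congr 1
  ext v
  exact colorForest_indeg_eq_zero hnet hE hσ

end Backward

/-- a 2-rooted network is proper forest-based iff `Γ(N)` has a
bipartite omni-extension (one admitting a proper 2-coloring). -/
theorem stmt14 {V : Type*} [Fintype V] (A : V → V → Prop) (X : Set V)
    (hnet : IsNetwork A X) (hroots : {v | indeg A v = 0}.ncard = 2) :
    ProperFB A X ↔
      ∃ E : V → V → Prop, OmniExt A E ∧
        ∃ σ : V → Bool, ∀ u v, E u v → σ u ≠ σ v :=
  ⟨ProperFB.exists_bipartite_omniExt hnet hroots,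
    fun ⟨_, hE, _, hσ⟩ => properFB_of_bipartite_omniExt hnet hE hσ⟩
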